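/- Let V ∈ ℕ, c > 0, and for each i ∈ {1,…,V} let A_i ∈ ℝ^{m×n_i}, F_i : ℝ^{n_i} → ℝ and G : ℝ^m → ℝ be differentiable. Define L_c({p_i},{ν_i},q) = Σ_{i=1}^V [F_i(p_i) + ⟨ν_i, A_i p_i − q⟩ + (c/2)‖A_i p_i − q‖²] + G(q). Suppose (p_i, ν_i, q) satisfies ∇F_i(p_i) = −A_iᵀν_i for all i, and ∇G(q) = Σ_{i=1}^V [ν_i + c(A_i p_i − q)]. Then the gradient of L_c at this point has blocks ∇_{p_i} L_c = cA_iᵀ(A_i p_i − q), ∇_{ν_i} L_c = A_i p_i − q, and ∇_q L_c = 0, and consequently ‖∇L_c‖² ≥ Σ_{i=1}^V (c² μ_{A_iA_iᵀ} + 1)‖A_i p_i − q‖², where μ_{A_iA_iᵀ} is the smallest singular value of A_iA_iᵀ and ‖·‖ is the Euclidean norm. -/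

import Mathlib

/-!
At a point satisfying the first-order conditions, the optimality condition for `p_i` cancels
`∇F_i(p_i)` against the multiplier term `A_iᵀν_i`, leaving only the penalty gradient
`c A_iᵀ(A_i p_i − q)`, and the condition for `q` cancels `∇G(q)` exactly.

For the lower bound, expand `r` in an orthonormal eigenbasis of the positive semidefinite matrix
`A_iA_iᵀ`: then `‖A_iᵀ r‖² = ⟪r, A_iA_iᵀ r⟫ ≥ λ_min ‖r‖²`, and `λ_min ≥ μ_{A_iA_iᵀ}` because each
eigenvalue is the value of `‖A_iA_iᵀ x‖` at a unit eigenvector `x`.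
-/

open Matrix RealInnerProductSpace

/-- The smallest singular value of a square real matrix `B`, via its variational
characterization `μ_B = inf_{‖x‖=1} ‖Bx‖` (Euclidean norms). -/
noncomputable def minSingularValue {k : ℕ} (B : Matrix (Fin k) (Fin k) ℝ) : ℝ :=
  sInf {r : ℝ | ∃ x : EuclideanSpace ℝ (Fin k), ‖x‖ = 1 ∧ r = ‖Matrix.toEuclideanLin B x‖}

section GradientCalculus

variable {E F : Type*} [NormedAddCommGroup E] [InnerProductSpace ℝ E] [CompleteSpace E]
  [NormedAddCommGroup F] [InnerProductSpace ℝ F] [CompleteSpace F]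
  {f g : E → ℝ} {f' g' x : E}

theorem HasGradientAt.add (hf : HasGradientAt f f' x) (hg : HasGradientAt g g' x) :
    HasGradientAt (fun y => f y + g y) (f' + g') x := by
  rw [hasGradientAt_iff_hasFDerivAt, map_add]
  exact hf.hasFDerivAt.add hg.hasFDerivAt

theorem HasGradientAt.add_const (hf : HasGradientAt f f' x) (a : ℝ) :
    HasGradientAt (fun y => f y + a) f' x := by
  rw [hasGradientAt_iff_hasFDerivAt]
  exact hf.hasFDerivAt.add_const a

theorem HasGradientAt.sum {ι : Type*} {s : Finset ι} {f : ι → E → ℝ} {f' : ι → E}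
    (hf : ∀ i ∈ s, HasGradientAt (f i) (f' i) x) :
    HasGradientAt (fun y => ∑ i ∈ s, f i y) (∑ i ∈ s, f' i) x := by
  rw [hasGradientAt_iff_hasFDerivAt, map_sum]
  exact HasFDerivAt.fun_sum fun i hi => (hf i hi).hasFDerivAt

theorem HasGradientAt.comp_hasFDerivAt {g : F → ℝ} {g' : F} {a : E → F} {T : E →L[ℝ] F}
    (hg : HasGradientAt g g' (a x)) (ha : HasFDerivAt a T x) :
    HasGradientAt (fun y => g (a y)) (T.adjoint g') x := by
  have hT : InnerProductSpace.toDual ℝ E (T.adjoint g')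
      = (InnerProductSpace.toDual ℝ F g').comp T := by
    ext y
    simp [ContinuousLinearMap.adjoint_inner_left]
  rw [hasGradientAt_iff_hasFDerivAt, hT]
  exact hg.hasFDerivAt.comp x ha

theorem hasGradientAt_inner_left (v x : E) : HasGradientAt (fun y => ⟪y, v⟫) v x := by
  simp_rw [real_inner_comm v]
  exact (InnerProductSpace.toDual ℝ E v).hasFDerivAt

theorem hasGradientAt_inner_add_norm_sq (v u : F) (c : ℝ) :
    HasGradientAt (fun y => ⟪v, y⟫ + c / 2 * ‖y‖ ^ 2) (v + c • u) u := by
  have hD : InnerProductSpace.toDual ℝ F (v + c • u)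
      = InnerProductSpace.toDual ℝ F v + (c / 2) • (2 • innerSL ℝ u) := by
    ext y
    simp
    ring
  rw [hasGradientAt_iff_hasFDerivAt, hD]
  exact (InnerProductSpace.toDual ℝ F v).hasFDerivAt.add
    ((hasStrictFDerivAt_norm_sq u).hasFDerivAt.const_mul (c / 2))

theorem HasFDerivAt.hasGradientAt_inner_add_norm_sq {a : E → F} {T : E →L[ℝ] F}
    (ha : HasFDerivAt a T x) (v : F) (c : ℝ) :
    HasGradientAt (fun y => ⟪v, a y⟫ + c / 2 * ‖a y‖ ^ 2) (T.adjoint (v + c • a x)) x :=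
  (_root_.hasGradientAt_inner_add_norm_sq v (a x) c).comp_hasFDerivAt ha

end GradientCalculus

theorem Finset.sum_apply_update_eq_add_sum_erase {ι M : Type*} [Fintype ι] [DecidableEq ι]
    [AddCommMonoid M] {β : ι → Type*} (φ : (j : ι) → β j → M) (p : (j : ι) → β j) (i : ι)
    (x : β i) :
    ∑ j, φ j (Function.update p i x j) = φ i x + ∑ j ∈ univ.erase i, φ j (p j) := by
  rw [← add_sum_erase _ _ (mem_univ i), Function.update_self]
  congr 1
  refine sum_congr rfl fun j hj => ?_
  rw [Function.update_of_ne (ne_of_mem_erase hj)]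

theorem Matrix.adjoint_toEuclideanLin_apply {k l : Type*} [Fintype k] [Fintype l]
    [DecidableEq k] [DecidableEq l] (A : Matrix k l ℝ) (y : EuclideanSpace ℝ k) :
    (toEuclideanLin A).toContinuousLinearMap.adjoint y = toEuclideanLin Aᵀ y := by
  rw [← LinearMap.adjoint_toContinuousLinearMap, ← toEuclideanLin_conjTranspose_eq_adjoint,
    conjTranspose_eq_transpose_of_trivial]
  rfl

theorem Matrix.hasFDerivAt_toEuclideanLin_sub {k l : Type*} [Fintype k] [Fintype l]
    [DecidableEq l] (A : Matrix k l ℝ) (q : EuclideanSpace ℝ k) (x : EuclideanSpace ℝ l) :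
    HasFDerivAt (fun y => toEuclideanLin A y - q) (toEuclideanLin A).toContinuousLinearMap x :=
  (toEuclideanLin A).toContinuousLinearMap.hasFDerivAt.sub_const q

theorem OrthonormalBasis.mul_norm_sq_le_inner_map_self {ι E : Type*} [Fintype ι]
    [NormedAddCommGroup E] [InnerProductSpace ℝ E] (b : OrthonormalBasis ι ℝ E)
    (T : E →ₗ[ℝ] E) (eigval : ι → ℝ) (hT : ∀ j, T (b j) = eigval j • b j) {μ : ℝ}
    (hμ : ∀ j, μ ≤ eigval j) (x : E) : μ * ‖x‖ ^ 2 ≤ ⟪x, T x⟫ := by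
  have hTx : T x = ∑ j, (eigval j * ⟪b j, x⟫) • b j := by
    conv_lhs => rw [← b.sum_repr' x]
    simp only [map_sum, map_smul, hT, smul_smul, mul_comm]
  have hexpand : ⟪x, T x⟫ = ∑ j, eigval j * ⟪b j, x⟫ ^ 2 := by
    simp only [hTx, inner_sum, real_inner_smul_right, real_inner_comm x]
    ring_nf
  rw [hexpand, ← b.sum_sq_inner_right x, Finset.mul_sum]
  exact Finset.sum_le_sum fun j _ => mul_le_mul_of_nonneg_right (hμ j) (sq_nonneg _)

theorem Matrix.IsHermitian.toEuclideanLin_eigenvectorBasis {𝕜 ι : Type*} [RCLike 𝕜]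
    [Fintype ι] [DecidableEq ι] {B : Matrix ι ι 𝕜} (hB : B.IsHermitian) (j : ι) :
    toEuclideanLin B (hB.eigenvectorBasis j) = hB.eigenvalues j • hB.eigenvectorBasis j := by
  apply (WithLp.equiv 2 (ι → 𝕜)).injective
  simpa using hB.mulVec_eigenvectorBasis j

theorem Matrix.PosSemidef.minSingularValue_le_eigenvalues {k : ℕ}
    {B : Matrix (Fin k) (Fin k) ℝ} (hB : B.PosSemidef) (j : Fin k) :
    minSingularValue B ≤ hB.isHermitian.eigenvalues j := by
  have hv : ‖hB.isHermitian.eigenvectorBasis j‖ = 1 :=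
    hB.isHermitian.eigenvectorBasis.orthonormal.1 j
  refine csInf_le ⟨0, by rintro t ⟨x, -, rfl⟩; positivity⟩ ⟨_, hv, ?_⟩
  rw [hB.isHermitian.toEuclideanLin_eigenvectorBasis, norm_smul, hv, mul_one,
    Real.norm_of_nonneg (hB.eigenvalues_nonneg j)]

theorem Matrix.PosSemidef.minSingularValue_mul_norm_sq_le_inner {k : ℕ}
    {B : Matrix (Fin k) (Fin k) ℝ} (hB : B.PosSemidef) (x : EuclideanSpace ℝ (Fin k)) :
    minSingularValue B * ‖x‖ ^ 2 ≤ ⟪x, toEuclideanLin B x⟫ :=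
  hB.isHermitian.eigenvectorBasis.mul_norm_sq_le_inner_map_self _ _
    hB.isHermitian.toEuclideanLin_eigenvectorBasis hB.minSingularValue_le_eigenvalues x

theorem Matrix.minSingularValue_mul_transpose_mul_norm_sq_le {m k : ℕ}
    (A : Matrix (Fin m) (Fin k) ℝ) (r : EuclideanSpace ℝ (Fin m)) :
    minSingularValue (A * Aᵀ) * ‖r‖ ^ 2 ≤ ‖toEuclideanLin Aᵀ r‖ ^ 2 := by
  have hPSD : (A * Aᵀ).PosSemidef := by
    simpa [conjTranspose_eq_transpose_of_trivial] using posSemidef_self_mul_conjTranspose A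
  calc minSingularValue (A * Aᵀ) * ‖r‖ ^ 2 ≤ ⟪r, toEuclideanLin (A * Aᵀ) r⟫ :=
        hPSD.minSingularValue_mul_norm_sq_le_inner r
    _ = ‖toEuclideanLin Aᵀ r‖ ^ 2 := by
        rw [← real_inner_self_eq_norm_sq, ← adjoint_toEuclideanLin_apply A,
          ContinuousLinearMap.adjoint_inner_left, adjoint_toEuclideanLin_apply]
        simp

section ConsensusLagrangian

variable {ι : Type*} [Fintype ι] {m : ℕ} {n : ι → ℕ} (c : ℝ)
  (A : (i : ι) → Matrix (Fin m) (Fin (n i)) ℝ)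
  (F : (i : ι) → EuclideanSpace ℝ (Fin (n i)) → ℝ) (G : EuclideanSpace ℝ (Fin m) → ℝ)
  (p : (i : ι) → EuclideanSpace ℝ (Fin (n i))) (ν : ι → EuclideanSpace ℝ (Fin m))
  (q : EuclideanSpace ℝ (Fin m))

noncomputable def consensusLagrangian : ℝ :=
  (∑ i, (F i (p i) + ⟪ν i, toEuclideanLin (A i) (p i) - q⟫
    + c / 2 * ‖toEuclideanLin (A i) (p i) - q‖ ^ 2)) + G q

theorem hasGradientAt_consensusLagrangian_primal [DecidableEq ι] (i : ι)
    {F' : EuclideanSpace ℝ (Fin (n i))} (hF : HasGradientAt (F i) F' (p i)) :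
    HasGradientAt (fun x => consensusLagrangian c A F G (Function.update p i x) ν q)
      (F' + toEuclideanLin (A i)ᵀ (ν i + c • (toEuclideanLin (A i) (p i) - q))) (p i) := by
  have hsplit : (fun x => consensusLagrangian c A F G (Function.update p i x) ν q) = fun x =>
      (F i x + (⟪ν i, toEuclideanLin (A i) x - q⟫ + c / 2 * ‖toEuclideanLin (A i) x - q‖ ^ 2))
        + ((∑ j ∈ Finset.univ.erase i, (F j (p j) + ⟪ν j, toEuclideanLin (A j) (p j) - q⟫
          + c / 2 * ‖toEuclideanLin (A j) (p j) - q‖ ^ 2)) + G q) := by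
    funext x
    rw [consensusLagrangian, Finset.sum_apply_update_eq_add_sum_erase (fun j y =>
      F j y + ⟪ν j, toEuclideanLin (A j) y - q⟫ + c / 2 * ‖toEuclideanLin (A j) y - q‖ ^ 2)]
    ring
  rw [hsplit, ← adjoint_toEuclideanLin_apply]
  exact (hF.add ((hasFDerivAt_toEuclideanLin_sub (A i) q (p i)).hasGradientAt_inner_add_norm_sq
    (ν i) c)).add_const _

theorem hasGradientAt_consensusLagrangian_dual [DecidableEq ι] (i : ι) :
    HasGradientAt (fun x => consensusLagrangian c A F G p (Function.update ν i x) q)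
      (toEuclideanLin (A i) (p i) - q) (ν i) := by
  have hsplit : (fun x => consensusLagrangian c A F G p (Function.update ν i x) q) = fun x =>
      ⟪x, toEuclideanLin (A i) (p i) - q⟫
        + (F i (p i) + c / 2 * ‖toEuclideanLin (A i) (p i) - q‖ ^ 2
          + ((∑ j ∈ Finset.univ.erase i, (F j (p j) + ⟪ν j, toEuclideanLin (A j) (p j) - q⟫
            + c / 2 * ‖toEuclideanLin (A j) (p j) - q‖ ^ 2)) + G q)) := by
    funext x
    rw [consensusLagrangian, Finset.sum_apply_update_eq_add_sum_erase (fun j y =>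
      F j (p j) + ⟪y, toEuclideanLin (A j) (p j) - q⟫
        + c / 2 * ‖toEuclideanLin (A j) (p j) - q‖ ^ 2)]
    ring
  rw [hsplit]
  exact (hasGradientAt_inner_left _ _).add_const _

theorem hasGradientAt_consensusLagrangian_consensus {G' : EuclideanSpace ℝ (Fin m)}
    (hG : HasGradientAt G G' q) :
    HasGradientAt (fun x => consensusLagrangian c A F G p ν x)
      (G' - ∑ i, (ν i + c • (toEuclideanLin (A i) (p i) - q))) q := by
  have hsplit : (fun x => consensusLagrangian c A F G p ν x) = fun x =>
      (∑ i, (F i (p i) + (⟪ν i, toEuclideanLin (A i) (p i) - x⟫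
        + c / 2 * ‖toEuclideanLin (A i) (p i) - x‖ ^ 2))) + G x := by
    funext x
    simp only [consensusLagrangian, add_assoc]
  have hterm : ∀ i ∈ Finset.univ, HasGradientAt (fun x => F i (p i)
      + (⟪ν i, toEuclideanLin (A i) (p i) - x⟫ + c / 2 * ‖toEuclideanLin (A i) (p i) - x‖ ^ 2))
      (-(ν i + c • (toEuclideanLin (A i) (p i) - q))) q := by
    intro i _
    have h := ((hasFDerivAt_id q).const_sub (toEuclideanLin (A i) (p i))
      ).hasGradientAt_inner_add_norm_sq (ν i) c
    simpa [add_comm (F i (p i)), ContinuousLinearMap.adjoint_id] using h.add_const (F i (p i))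
  rw [hsplit, sub_eq_neg_add, ← Finset.sum_neg_distrib]
  exact (HasGradientAt.sum hterm).add hG

end ConsensusLagrangian

theorem statement14_general {V m : ℕ} {n : Fin V → ℕ} (c : ℝ)
    (A : (i : Fin V) → Matrix (Fin m) (Fin (n i)) ℝ)
    (F : (i : Fin V) → EuclideanSpace ℝ (Fin (n i)) → ℝ)
    (hFdiff : ∀ i, Differentiable ℝ (F i))
    (G : EuclideanSpace ℝ (Fin m) → ℝ) (hGdiff : Differentiable ℝ G)
    (Lc : ((i : Fin V) → EuclideanSpace ℝ (Fin (n i))) →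
      (Fin V → EuclideanSpace ℝ (Fin m)) → EuclideanSpace ℝ (Fin m) → ℝ)
    (hLc : ∀ p ν q, Lc p ν q =
      (∑ i, (F i (p i) + ⟪ν i, Matrix.toEuclideanLin (A i) (p i) - q⟫
        + c / 2 * ‖Matrix.toEuclideanLin (A i) (p i) - q‖ ^ 2)) + G q)
    (p : (i : Fin V) → EuclideanSpace ℝ (Fin (n i)))
    (ν : Fin V → EuclideanSpace ℝ (Fin m)) (q : EuclideanSpace ℝ (Fin m))
    (h1 : ∀ i, gradient (F i) (p i) = -(Matrix.toEuclideanLin (A i)ᵀ (ν i)))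
    (h2 : gradient G q = ∑ i, (ν i + c • (Matrix.toEuclideanLin (A i) (p i) - q))) :
    (∀ i, gradient (fun x => Lc (Function.update p i x) ν q) (p i)
        = c • Matrix.toEuclideanLin (A i)ᵀ (Matrix.toEuclideanLin (A i) (p i) - q))
    ∧ (∀ i, gradient (fun x => Lc p (Function.update ν i x) q) (ν i)
        = Matrix.toEuclideanLin (A i) (p i) - q)
    ∧ gradient (fun x => Lc p ν x) q = 0
    ∧ (∑ i, ‖gradient (fun x => Lc (Function.update p i x) ν q) (p i)‖ ^ 2)
        + (∑ i, ‖gradient (fun x => Lc p (Function.update ν i x) q) (ν i)‖ ^ 2)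
        + ‖gradient (fun x => Lc p ν x) q‖ ^ 2
      ≥ ∑ i, (c ^ 2 * minSingularValue (A i * (A i)ᵀ) + 1)
          * ‖Matrix.toEuclideanLin (A i) (p i) - q‖ ^ 2 := by
  obtain rfl : Lc = consensusLagrangian c A F G := by
    funext p ν q
    exact hLc p ν q
  have hprimal : ∀ i,
      gradient (fun x => consensusLagrangian c A F G (Function.update p i x) ν q) (p i) =
        c • toEuclideanLin (A i)ᵀ (toEuclideanLin (A i) (p i) - q) := fun i => by
    rw [(hasGradientAt_consensusLagrangian_primal c A F G p ν q i
      (h1 i ▸ (hFdiff i (p i)).hasGradientAt)).gradient, map_add, map_smul]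
    abel
  have hdual : ∀ i,
      gradient (fun x => consensusLagrangian c A F G p (Function.update ν i x) q) (ν i) =
        toEuclideanLin (A i) (p i) - q := fun i =>
    (hasGradientAt_consensusLagrangian_dual c A F G p ν q i).gradient
  have hconsensus : gradient (fun x => consensusLagrangian c A F G p ν x) q = 0 := by
    rw [(hasGradientAt_consensusLagrangian_consensus c A F G p ν q
      (hGdiff q).hasGradientAt).gradient, h2, sub_self]
  refine ⟨hprimal, hdual, hconsensus, ?_⟩
  simp only [hprimal, hdual, hconsensus, norm_zero, norm_smul, mul_pow, Real.norm_eq_abs, sq_abs]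
  rw [ge_iff_le, ← Finset.sum_add_distrib, zero_pow two_ne_zero, add_zero]
  refine Finset.sum_le_sum fun i _ => ?_
  have hsv := mul_le_mul_of_nonneg_left
    ((A i).minSingularValue_mul_transpose_mul_norm_sq_le (toEuclideanLin (A i) (p i) - q))
    (sq_nonneg c)
  linarith

/-- Gradient blocks of the consensus augmented Lagrangian after a full
ADMM update: if `∇F_i(p_i) = −A_iᵀν_i` for all `i` and `∇G(q) = ∑_i [ν_i + c(A_i p_i − q)]`,
then `∇_{p_i} L_c = cA_iᵀ(A_i p_i − q)`, `∇_{ν_i} L_c = A_i p_i − q`, `∇_q L_c = 0`, and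
consequently `‖∇L_c‖² ≥ ∑_i (c² μ_{A_iA_iᵀ} + 1)‖A_i p_i − q‖²` (the squared norm of the
full gradient being the sum of the squared norms of its blocks). -/
theorem statement14 {V m : ℕ} {n : Fin V → ℕ} (c : ℝ) (hc : 0 < c)
    (A : (i : Fin V) → Matrix (Fin m) (Fin (n i)) ℝ)
    (F : (i : Fin V) → EuclideanSpace ℝ (Fin (n i)) → ℝ)
    (hFdiff : ∀ i, Differentiable ℝ (F i))
    (G : EuclideanSpace ℝ (Fin m) → ℝ) (hGdiff : Differentiable ℝ G)
    (Lc : ((i : Fin V) → EuclideanSpace ℝ (Fin (n i))) →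
      (Fin V → EuclideanSpace ℝ (Fin m)) → EuclideanSpace ℝ (Fin m) → ℝ)
    (hLc : ∀ p ν q, Lc p ν q =
      (∑ i, (F i (p i) + ⟪ν i, Matrix.toEuclideanLin (A i) (p i) - q⟫
        + c / 2 * ‖Matrix.toEuclideanLin (A i) (p i) - q‖ ^ 2)) + G q)
    (p : (i : Fin V) → EuclideanSpace ℝ (Fin (n i)))
    (ν : Fin V → EuclideanSpace ℝ (Fin m)) (q : EuclideanSpace ℝ (Fin m))
    (h1 : ∀ i, gradient (F i) (p i) = -(Matrix.toEuclideanLin (A i)ᵀ (ν i)))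
    (h2 : gradient G q = ∑ i, (ν i + c • (Matrix.toEuclideanLin (A i) (p i) - q))) :
    (∀ i, gradient (fun x => Lc (Function.update p i x) ν q) (p i)
        = c • Matrix.toEuclideanLin (A i)ᵀ (Matrix.toEuclideanLin (A i) (p i) - q))
    ∧ (∀ i, gradient (fun x => Lc p (Function.update ν i x) q) (ν i)
        = Matrix.toEuclideanLin (A i) (p i) - q)
    ∧ gradient (fun x => Lc p ν x) q = 0
    ∧ (∑ i, ‖gradient (fun x => Lc (Function.update p i x) ν q) (p i)‖ ^ 2)
        + (∑ i, ‖gradient (fun x => Lc p (Function.update ν i x) q) (ν i)‖ ^ 2)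
        + ‖gradient (fun x => Lc p ν x) q‖ ^ 2
      ≥ ∑ i, (c ^ 2 * minSingularValue (A i * (A i)ᵀ) + 1)
          * ‖Matrix.toEuclideanLin (A i) (p i) - q‖ ^ 2 :=
  statement14_general c A F hFdiff G hGdiff Lc hLc p ν q h1 h2
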